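/- arXiv:0801.0005 — 2 statements merged into one kernel-verified Lean document; each statement's English description precedes it below -/
import Mathlib

section
/- Let n ≥ 1 and let D ⊂ ℤ^n be a finite set. For h ∈ ℤ^n write h = h⁺ − h⁻ with h⁺, h⁻ ∈ ℕ^n the coordinatewise positive and negative parts, and set G_h = ∏_{λ∈D} (X^{h⁺} − v^{⟨h,λ⟩} X^{h⁻}) ∈ ℚ(v)[X_1,…,X_n]. Let Δ′ be the ideal of ℚ(v)[X_1,…,X_n] generated by {G_h : h ∈ ℤ^n}. Then the quotient ring ℚ(v)[X_1,…,X_n]/Δ′ is reduced (it has no nonzero nilpotent elements). -/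
/-!
Let `A` be the quotient ring and `K = ℚ(v)`. Each `X_a` is a root of `∏_λ (Y - v^{λ_a})`, whose
roots are units, so the images `u_a` of the `X_a` are units and the Laurent monomials
`χ(h) = ∏ u_a^{h_a}` satisfy `∏_λ (χ(h) - v^{⟨h,λ⟩}) = 0` for every `h ∈ ℤⁿ`. Pick `g` with the
`⟨g,λ⟩`, `λ ∈ D`, pairwise distinct. The factors `χ(g) - v^{⟨g,λ⟩}` are then pairwise coprime
with product `0`, so a nilpotent element is `0` as soon as it vanishes in every
`A / (χ(g) - v^{⟨g,λ₀⟩})`.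
In that quotient, the relation for `h + t g` reads
`∏_λ (χ(h) - v^{⟨h,λ⟩ + t(⟨g,λ⟩ - ⟨g,λ₀⟩)}) = 0`; since `v` has infinite order, for `t = 0` and a
suitable `t = T` the two products share only the factor of `λ₀`, which forces
`χ(h) = v^{⟨h,λ₀⟩}`. So the quotient is generated by the image of the field `K`, hence reduced.
-/

open Finset Function

theorem exists_injOn_dotProduct {n : ℕ} (D : Finset (Fin n → ℤ)) :
    ∃ g : Fin n → ℤ, Set.InjOn (g ⬝ᵥ ·) D := by
  classical
  -- `g = (1, t, t², …)` with `t` not a root of any of the nonzero `∑ₐ (λ_a - μ_a) Yᵃ`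
  set P : Polynomial ℤ := ∏ p ∈ D.offDiag, (Polynomial.ofFn n p.1 - Polynomial.ofFn n p.2)
  have hP : P ≠ 0 := prod_ne_zero_iff.mpr fun p hp =>
    sub_ne_zero.mpr <| (Polynomial.injective_ofFn n).ne (mem_offDiag.mp hp).2.2
  obtain ⟨t, ht⟩ : ∃ t : ℤ, P.eval t ≠ 0 := by
    by_contra! h
    exact hP (Polynomial.funext fun t => by simpa using h t)
  refine ⟨fun i => t ^ (i : ℕ), fun lam hlam mu hmu heq => by_contra fun hne => ?_⟩
  rw [Polynomial.eval_prod, prod_ne_zero_iff] at ht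
  refine ht (lam, mu) (mem_offDiag.mpr ⟨hlam, hmu, hne⟩) ?_
  simp only [dotProduct] at heq
  simp only [Polynomial.eval_sub, Polynomial.ofFn_eq_sum_monomial, Polynomial.eval_finsetSum,
    Polynomial.eval_monomial, sub_eq_zero]
  simpa only [mul_comm] using heq

theorem exists_nat_forall_ne_add_mul {ι : Type*} (s : Finset ι) (c d : ι → ℤ)
    (hd : ∀ j ∈ s, d j ≠ 0) : ∃ T : ℕ, ∀ i ∈ s, ∀ j ∈ s, c i ≠ c j + T * d j := by
  classical
  -- `T` avoids the finitely many values `(c i - c j) / d j`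
  obtain ⟨T, hT⟩ := Infinite.exists_notMem_finset
    ((s ×ˢ s).image fun p => ((c p.1 - c p.2) / d p.2).toNat)
  refine ⟨T, fun i hi j hj heq => hT (mem_image.mpr ⟨(i, j), mem_product.mpr ⟨hi, hj⟩, ?_⟩)⟩
  simp [heq, Int.mul_ediv_cancel _ (hd j hj)]

theorem isUnit_of_prod_sub_eq_zero {A ι : Type*} [CommRing A] {s : Finset ι} {c : ι → A}
    (hc : ∀ i ∈ s, IsUnit (c i)) {x : A} (hx : ∏ i ∈ s, (x - c i) = 0) : IsUnit x := by
  have hdvd : x ∣ ∏ i ∈ s, -c i := by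
    rw [← Ideal.mem_span_singleton, ← Ideal.Quotient.eq_zero_iff_mem,
      ← map_zero (Ideal.Quotient.mk _), ← hx, map_prod, map_prod]
    simp [Ideal.Quotient.eq_zero_iff_mem.mpr (Ideal.mem_span_singleton_self x)]
  exact isUnit_of_dvd_unit hdvd (IsUnit.prod_iff.mpr fun i hi => (hc i hi).neg)

theorem Algebra.adjoin_range_comp_of_surjective {R A B ι : Type*} [CommSemiring R] [Semiring A]
    [Semiring B] [Algebra R A] [Algebra R B] {f : A →ₐ[R] B} (hf : Surjective f) {x : ι → A}
    (hx : adjoin R (Set.range x) = ⊤) : adjoin R (Set.range (f ∘ x)) = ⊤ := by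
  rw [Set.range_comp, adjoin_image, hx, map_top, (AlgHom.range_eq_top f).mpr hf]

theorem ne_zero_of_injective_zpow {M : Type*} [GroupWithZero M] {v : M}
    (hv : Injective (v ^ · : ℤ → M)) : v ≠ 0 :=
  fun hv0 => absurd (@hv 1 2 (by simp [hv0])) (by norm_num)

variable {K A : Type*} [Field K] [CommRing A] [Algebra K A]

theorem isCoprime_sub_algebraMap (y : A) {c d : K} (h : c ≠ d) :
    IsCoprime (y - algebraMap K A c) (y - algebraMap K A d) := by
  refine ⟨algebraMap K A (d - c)⁻¹, -algebraMap K A (d - c)⁻¹, ?_⟩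
  have hinv : algebraMap K A (d - c)⁻¹ * (algebraMap K A d - algebraMap K A c) = 1 := by
    rw [← map_sub, ← map_mul, inv_mul_cancel₀ (sub_ne_zero.mpr h.symm), map_one]
  linear_combination hinv

theorem isReduced_of_surjective_algebraMap (h : Surjective (algebraMap K A)) :
    IsReduced A := by
  refine ⟨fun b ⟨m, hm⟩ => ?_⟩
  obtain ⟨c, rfl⟩ := h b
  rcases eq_or_ne c 0 with rfl | hc
  · exact map_zero _
  · calc algebraMap K A c = algebraMap K A c ^ m * algebraMap K A ((c ^ m)⁻¹ * c) := by
          rw [← map_pow, ← map_mul, ← mul_assoc, mul_inv_cancel₀ (pow_ne_zero _ hc), one_mul]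
      _ = 0 := by rw [hm, zero_mul]

theorem eq_algebraMap_of_prod_sub_eq_zero {ι : Type*} [DecidableEq ι] {s : Finset ι} {i₀ : ι}
    (hi₀ : i₀ ∈ s) {c d : ι → K} (hcd : c i₀ = d i₀)
    (hne : ∀ i ∈ s.erase i₀, ∀ j ∈ s.erase i₀, c i ≠ d j) {y : A}
    (hc : ∏ i ∈ s, (y - algebraMap K A (c i)) = 0)
    (hd : ∏ i ∈ s, (y - algebraMap K A (d i)) = 0) : y = algebraMap K A (c i₀) := by
  obtain ⟨p, q, hpq⟩ : IsCoprime (∏ i ∈ s.erase i₀, (y - algebraMap K A (c i)))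
      (∏ j ∈ s.erase i₀, (y - algebraMap K A (d j))) :=
    IsCoprime.prod_left fun i hi => IsCoprime.prod_right fun j hj =>
      isCoprime_sub_algebraMap y (hne i hi j hj)
  rw [← mul_prod_erase s _ hi₀] at hc hd
  rw [← hcd] at hd
  linear_combination p * hc + q * hd - (y - algebraMap K A (c i₀)) * hpq

section LaurentMonomial

variable {G H : Type*} [CommGroup G] [CommGroup H] {n : ℕ}

def laurentMonomial (u : Fin n → G) (h : Fin n → ℤ) : G :=
  ∏ a, u a ^ h a

theorem laurentMonomial_add (u : Fin n → G) (h h' : Fin n → ℤ) :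
    laurentMonomial u (h + h') = laurentMonomial u h * laurentMonomial u h' := by
  simp only [laurentMonomial, Pi.add_apply, zpow_add, prod_mul_distrib]

theorem laurentMonomial_nsmul (u : Fin n → G) (t : ℕ) (h : Fin n → ℤ) :
    laurentMonomial u (t • h) = laurentMonomial u h ^ t := by
  simp only [laurentMonomial, Pi.smul_apply, nsmul_eq_mul, mul_comm (t : ℤ), zpow_mul,
    zpow_natCast, prod_pow]

theorem laurentMonomial_single (u : Fin n → G) (a : Fin n) :
    laurentMonomial u (Pi.single a 1) = u a := by
  simp [laurentMonomial, Pi.single_apply]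

theorem map_laurentMonomial (f : G →* H) (u : Fin n → G) (h : Fin n → ℤ) :
    f (laurentMonomial u h) = laurentMonomial (f ∘ u) h := by
  simp [laurentMonomial, map_prod, map_zpow]

theorem Units.val_laurentMonomial_natCast {R : Type*} [CommMonoid R] (u : Fin n → Rˣ)
    (k : Fin n → ℕ) :
    ((laurentMonomial u fun a => (k a : ℤ) : Rˣ) : R) = ∏ a, (u a : R) ^ k a := by
  simp [laurentMonomial, Units.coe_prod]

end LaurentMonomial

theorem prod_laurentMonomial_sub_shift_eq_zero {n : ℕ} {v : K} (hv0 : v ≠ 0)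
    {D : Finset (Fin n → ℤ)} {u : Fin n → Aˣ}
    (hrel : ∀ h, ∏ lam ∈ D,
      (((laurentMonomial u h : Aˣ) : A) - algebraMap K A (v ^ (h ⬝ᵥ lam))) = 0)
    {g lam₀ : Fin n → ℤ}
    (hg₀ : ((laurentMonomial u g : Aˣ) : A) = algebraMap K A (v ^ (g ⬝ᵥ lam₀)))
    (h : Fin n → ℤ) (t : ℕ) :
    ∏ lam ∈ D, (((laurentMonomial u h : Aˣ) : A) -
      algebraMap K A (v ^ (h ⬝ᵥ lam + t * (g ⬝ᵥ lam - g ⬝ᵥ lam₀)))) = 0 := by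
  set c := algebraMap K A ((v ^ (g ⬝ᵥ lam₀)) ^ t)
  have hfactor : ∀ lam, ((laurentMonomial u (h + t • g) : Aˣ) : A) -
      algebraMap K A (v ^ ((h + t • g) ⬝ᵥ lam)) =
      c * (((laurentMonomial u h : Aˣ) : A) -
        algebraMap K A (v ^ (h ⬝ᵥ lam + t * (g ⬝ᵥ lam - g ⬝ᵥ lam₀)))) := by
    intro lam
    have hexp : v ^ ((h + t • g) ⬝ᵥ lam) =
        (v ^ (g ⬝ᵥ lam₀)) ^ t * v ^ (h ⬝ᵥ lam + t * (g ⬝ᵥ lam - g ⬝ᵥ lam₀)) := by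
      rw [← zpow_natCast, ← zpow_mul, ← zpow_add₀ hv0, add_dotProduct, smul_dotProduct,
        nsmul_eq_mul]
      ring_nf
    rw [laurentMonomial_add, laurentMonomial_nsmul, Units.val_mul, Units.val_pow_eq_pow_val, hg₀,
      hexp, map_mul, ← map_pow]
    ring
  have hc : IsUnit c := (isUnit_iff_ne_zero.mpr (pow_ne_zero _ (zpow_ne_zero _ hv0))).map _
  have := hrel (h + t • g)
  rwa [prod_congr rfl fun lam _ => hfactor lam, prod_mul_distrib, prod_const,
    (hc.pow _).mul_right_eq_zero] at this

theorem laurentMonomial_eq_of_forall_prod_eq_zero {n : ℕ} {v : K}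
    (hv : Injective (v ^ · : ℤ → K)) {D : Finset (Fin n → ℤ)} {u : Fin n → Aˣ}
    (hrel : ∀ h, ∏ lam ∈ D,
      (((laurentMonomial u h : Aˣ) : A) - algebraMap K A (v ^ (h ⬝ᵥ lam))) = 0)
    {g : Fin n → ℤ} (hg : Set.InjOn (g ⬝ᵥ ·) D) {lam₀ : Fin n → ℤ} (hlam₀ : lam₀ ∈ D)
    (hg₀ : ((laurentMonomial u g : Aˣ) : A) = algebraMap K A (v ^ (g ⬝ᵥ lam₀)))
    (h : Fin n → ℤ) : ((laurentMonomial u h : Aˣ) : A) = algebraMap K A (v ^ (h ⬝ᵥ lam₀)) := by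
  classical
  have hv0 := ne_zero_of_injective_zpow hv
  obtain ⟨T, hT⟩ := exists_nat_forall_ne_add_mul (D.erase lam₀) (h ⬝ᵥ ·)
    (fun lam => g ⬝ᵥ lam - g ⬝ᵥ lam₀) fun lam hlam => sub_ne_zero.mpr fun he =>
      ne_of_mem_erase hlam (hg (mem_of_mem_erase hlam) hlam₀ he)
  refine eq_algebraMap_of_prod_sub_eq_zero hlam₀ (c := fun lam => v ^ (h ⬝ᵥ lam))
    (d := fun lam => v ^ (h ⬝ᵥ lam + T * (g ⬝ᵥ lam - g ⬝ᵥ lam₀))) (by simp)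
    (fun i hi j hj => hv.ne (hT i hi j hj)) ?_
    (prod_laurentMonomial_sub_shift_eq_zero hv0 hrel hg₀ h T)
  simpa using prod_laurentMonomial_sub_shift_eq_zero hv0 hrel hg₀ h 0

theorem surjective_algebraMap_quotient_laurentMonomial_sub {n : ℕ} {v : K}
    (hv : Injective (v ^ · : ℤ → K)) {D : Finset (Fin n → ℤ)} {u : Fin n → Aˣ}
    (hu : Algebra.adjoin K (Set.range fun a => (u a : A)) = ⊤)
    (hrel : ∀ h, ∏ lam ∈ D,
      (((laurentMonomial u h : Aˣ) : A) - algebraMap K A (v ^ (h ⬝ᵥ lam))) = 0)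
    {g : Fin n → ℤ} (hg : Set.InjOn (g ⬝ᵥ ·) D) {lam₀ : Fin n → ℤ} (hlam₀ : lam₀ ∈ D) :
    Surjective (algebraMap K (A ⧸ Ideal.span
      {((laurentMonomial u g : Aˣ) : A) - algebraMap K A (v ^ (g ⬝ᵥ lam₀))})) := by
  set J := Ideal.span {((laurentMonomial u g : Aˣ) : A) - algebraMap K A (v ^ (g ⬝ᵥ lam₀))}
  set π := Ideal.Quotient.mkₐ K J
  set w : Fin n → (A ⧸ J)ˣ := fun a => Units.map π (u a)
  have hw : ∀ h, ((laurentMonomial w h : _ˣ) : A ⧸ J) = π (laurentMonomial u h : Aˣ) := fun h =>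
    congrArg Units.val (map_laurentMonomial (Units.map (π : A →* A ⧸ J)) u h).symm
  have hconst := laurentMonomial_eq_of_forall_prod_eq_zero hv (u := w)
    (fun h => by simpa [hw, map_prod, map_sub] using congrArg π (hrel h)) hg hlam₀
    (by
      rw [hw, ← π.commutes]
      exact Ideal.Quotient.eq.mpr (Ideal.mem_span_singleton_self _))
  have hgen : ∀ a, (w a : A ⧸ J) ∈ (⊥ : Subalgebra K (A ⧸ J)) := fun a => by
    rw [← laurentMonomial_single w a, hconst]
    exact Algebra.mem_bot.mpr ⟨_, rfl⟩
  have htop : Algebra.adjoin K (Set.range fun a => (w a : A ⧸ J)) = ⊤ :=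
    Algebra.adjoin_range_comp_of_surjective (Ideal.Quotient.mkₐ_surjective K J) hu
  intro b
  exact Algebra.mem_bot.mp (Algebra.adjoin_le (Set.range_subset_iff.mpr hgen)
    (htop ▸ Algebra.mem_top))

theorem isReduced_of_forall_prod_laurentMonomial_sub_eq_zero {n : ℕ} {v : K}
    (hv : Injective (v ^ · : ℤ → K)) (D : Finset (Fin n → ℤ)) (u : Fin n → Aˣ)
    (hu : Algebra.adjoin K (Set.range fun a => (u a : A)) = ⊤)
    (hrel : ∀ h, ∏ lam ∈ D,
      (((laurentMonomial u h : Aˣ) : A) - algebraMap K A (v ^ (h ⬝ᵥ lam))) = 0) :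
    IsReduced A := by
  obtain ⟨g, hg⟩ := exists_injOn_dotProduct D
  refine ⟨fun x hx => ?_⟩
  have hdvd : ∀ lam ∈ D,
      ((laurentMonomial u g : Aˣ) : A) - algebraMap K A (v ^ (g ⬝ᵥ lam)) ∣ x := fun lam hlam => by
    have := isReduced_of_surjective_algebraMap
      (surjective_algebraMap_quotient_laurentMonomial_sub hv hu hrel hg hlam)
    exact Ideal.mem_span_singleton.mp <| Ideal.Quotient.eq_zero_iff_mem.mp (hx.map _).eq_zero
  have hcop : (D : Set (Fin n → ℤ)).Pairwise (IsCoprime on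
      fun lam => ((laurentMonomial u g : Aˣ) : A) - algebraMap K A (v ^ (g ⬝ᵥ lam))) :=
    fun lam hlam mu hmu hne => isCoprime_sub_algebraMap _ (hv.ne fun he => hne (hg hlam hmu he))
  simpa [hrel g] using Finset.prod_dvd_of_coprime hcop hdvd

theorem isReduced_of_forall_prod_eq_zero {n : ℕ} {v : K}
    (hv : Injective (v ^ · : ℤ → K)) (D : Finset (Fin n → ℤ)) (x : Fin n → A)
    (hx : Algebra.adjoin K (Set.range x) = ⊤)
    (hrel : ∀ h : Fin n → ℤ, ∏ lam ∈ D, ((∏ a, x a ^ (h a).toNat) -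
      algebraMap K A (v ^ (h ⬝ᵥ lam)) * ∏ a, x a ^ (-(h a)).toNat) = 0) :
    IsReduced A := by
  have hv0 := ne_zero_of_injective_zpow hv
  have hunit : ∀ a, IsUnit (x a) := fun a =>
    isUnit_of_prod_sub_eq_zero (s := D) (c := fun lam => algebraMap K A (v ^ lam a))
      (fun lam _ => (isUnit_iff_ne_zero.mpr (zpow_ne_zero _ hv0)).map _)
      (by simpa [Pi.single_apply, apply_ite Int.toNat, apply_ite Neg.neg, apply_ite (x _ ^ ·)]
        using hrel (Pi.single a 1))
  set u := fun a => (hunit a).unit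
  refine isReduced_of_forall_prod_laurentMonomial_sub_eq_zero hv D u (by simpa [u] using hx)
    fun h => ?_
  have hsplit : (fun a => ((h a).toNat : ℤ)) = (fun a => ((-(h a)).toNat : ℤ)) + h := by
    funext a; simp only [Pi.add_apply]; omega
  have hfac : ∀ lam, (∏ a, x a ^ (h a).toNat) -
      algebraMap K A (v ^ (h ⬝ᵥ lam)) * ∏ a, x a ^ (-(h a)).toNat =
      ((laurentMonomial u fun a => ((-(h a)).toNat : ℤ) : Aˣ) : A) *
        (((laurentMonomial u h : Aˣ) : A) - algebraMap K A (v ^ (h ⬝ᵥ lam))) := by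
    intro lam
    rw [mul_sub, ← Units.val_mul, ← laurentMonomial_add, ← hsplit,
      Units.val_laurentMonomial_natCast, Units.val_laurentMonomial_natCast]
    simp only [u, IsUnit.unit_spec]
    ring
  have := hrel h
  rwa [prod_congr rfl fun lam _ => hfac lam, prod_mul_distrib, prod_const,
    ((Units.isUnit _).pow _).mul_right_eq_zero] at this

theorem RatFunc.intDegree_X_zpow {F : Type*} [Field F] (k : ℤ) :
    intDegree ((X : RatFunc F) ^ k) = k := by
  induction k using Int.induction_on with
  | zero => simp
  | succ k ih =>
    rw [zpow_add_one₀ X_ne_zero, intDegree_mul (zpow_ne_zero _ X_ne_zero) X_ne_zero, ih,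
      intDegree_X]
  | pred k ih =>
    rw [zpow_sub_one₀ X_ne_zero, intDegree_mul (zpow_ne_zero _ X_ne_zero) (inv_ne_zero X_ne_zero),
      ih, intDegree_inv, intDegree_X, sub_eq_add_neg]

theorem RatFunc.injective_X_zpow {F : Type*} [Field F] :
    Injective ((X : RatFunc F) ^ · : ℤ → RatFunc F) := fun i j h => by
  simpa only [intDegree_X_zpow] using congrArg intDegree h

theorem isReduced_mvPolynomial_quotient_of_forall_prod_mem {n : ℕ} {v : K}
    (hv : Injective (v ^ · : ℤ → K)) (D : Finset (Fin n → ℤ))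
    (I : Ideal (MvPolynomial (Fin n) K))
    (hI : ∀ h : Fin n → ℤ, ∏ lam ∈ D, ((∏ a, MvPolynomial.X a ^ (h a).toNat) -
      MvPolynomial.C (v ^ (h ⬝ᵥ lam)) * ∏ a, MvPolynomial.X a ^ (-(h a)).toNat) ∈ I) :
    IsReduced (MvPolynomial (Fin n) K ⧸ I) := by
  refine isReduced_of_forall_prod_eq_zero hv D (Ideal.Quotient.mkₐ K I ∘ MvPolynomial.X)
    (Algebra.adjoin_range_comp_of_surjective (Ideal.Quotient.mkₐ_surjective K I)
      MvPolynomial.adjoin_range_X) fun h => ?_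
  simpa only [map_prod, map_sub, map_mul, map_pow, comp_apply, Ideal.Quotient.mkₐ_eq_mk,
    ← MvPolynomial.algebraMap_eq, Ideal.Quotient.mk_algebraMap] using
    Ideal.Quotient.eq_zero_iff_mem.mpr (hI h)

theorem stmt5_general (n : ℕ) (D : Finset (Fin n → ℤ)) :
    IsReduced (MvPolynomial (Fin n) (RatFunc ℚ) ⧸
      Ideal.span (Set.range fun h : Fin n → ℤ =>
        ∏ lam ∈ D,
          ((∏ a, MvPolynomial.X a ^ (h a).toNat) -
            MvPolynomial.C ((RatFunc.X : RatFunc ℚ) ^ (∑ a, h a * lam a : ℤ)) *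
              ∏ a, MvPolynomial.X a ^ (-(h a)).toNat))) :=
  isReduced_mvPolynomial_quotient_of_forall_prod_mem RatFunc.injective_X_zpow D _ fun h =>
    Ideal.subset_span ⟨h, rfl⟩

/-- Let `D ⊂ ℤ^n` be finite.  For `h ∈ ℤ^n` with positive/negative
parts `h⁺, h⁻ ∈ ℕ^n`, set `G_h = ∏_{λ ∈ D} (X^{h⁺} − v^{⟨h,λ⟩} X^{h⁻})` and let `Δ′`
be the ideal of `ℚ(v)[X₁,…,Xₙ]` generated by the `G_h`.  Then the quotient ring
`ℚ(v)[X₁,…,Xₙ]/Δ′` is reduced. -/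
theorem stmt5 (n : ℕ) (hn : 1 ≤ n) (D : Finset (Fin n → ℤ)) :
    IsReduced (MvPolynomial (Fin n) (RatFunc ℚ) ⧸
      Ideal.span (Set.range fun h : Fin n → ℤ =>
        ∏ lam ∈ D,
          ((∏ a, MvPolynomial.X a ^ (h a).toNat) -
            MvPolynomial.C ((RatFunc.X : RatFunc ℚ) ^ (∑ a, h a * lam a : ℤ)) *
              ∏ a, MvPolynomial.X a ^ (-(h a)).toNat))) :=
  stmt5_general n D
end

section
/- Let n ≥ 1 and r ≥ 0, and let D = {λ ∈ ℤ^n : |λ_1| + ⋯ + |λ_n| ≤ r and |λ_1| + ⋯ + |λ_n| ≡ r (mod 2)}, viewed as a finite set of points of ℚ^n. Then the vanishing ideal in ℚ[X_1,…,X_n] of D equals the ideal generated by the polynomials ∏_{j=0}^{r} (J_ε − (r − 2j)) = (J_ε + r)(J_ε + r − 2)(J_ε + r − 4)⋯(J_ε − r + 2)(J_ε − r) for each of the 2^n sign vectors ε ∈ {±1}^n, where J_ε = ε_1 X_1 + ⋯ + ε_n X_n. -/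
/-!
Let `T : ℚ[Y_ε] → ℚ[X]` send `Y_ε ↦ J_ε`, and let `G` be the grid of points `(y_ε)_ε` with every
`y_ε ∈ {r, r - 2, …, -r}`. The identity `J_1 - J_ε' = 2 X_a`, where `ε'` flips the `a`-th sign of
`1`, shows both that `T` is surjective and that a point `x` with `(J_ε(x))_ε ∈ G` is integral;
taking `ε` to be the sign vector of `x` then shows that `x ↦ (J_ε(x))_ε` pulls `G` back exactly
to `D`.

For a surjective `T` and a finite set `P`, the vanishing ideal of the pullback of `P` is the image
of the vanishing ideal of `P`: a preimage `F` of a polynomial vanishing on the pullback vanishes at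
the points of `P` in the image of the point map, and multiplying by `1 - E`, where `E ∈ ker T` is
`1` at the finitely many remaining points of `P`, makes it vanish on all of `P`. The Combinatorial
Nullstellensatz describes the vanishing ideal of `G`, and `T` maps its generators to the products
in the statement.
-/

open MvPolynomial Finset

namespace MvPolynomial

variable {k σ τ : Type*} [Field k]

theorem aeval_comap (f : MvPolynomial σ k →ₐ[k] MvPolynomial τ k) (x : τ → k)
    (p : MvPolynomial σ k) : aeval (comap f x) p = aeval x (f p) := by
  rw [← AlgHom.comp_apply]
  congr 1
  exact algHom_ext fun i => by simp

theorem exists_mem_ker_aeval_eq_one_of_notMem_range_comap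
    {f : MvPolynomial σ k →ₐ[k] MvPolynomial τ k} (hf : Function.Surjective f)
    {p : σ → k} (hp : p ∉ Set.range (comap f)) :
    ∃ H ∈ RingHom.ker f, aeval p H = 1 := by
  choose s hs using fun i : τ => hf (X i)
  set x : τ → k := fun j => aeval p (s j)
  obtain ⟨i, hi⟩ : ∃ i, p i ≠ comap f x i := by
    by_contra! h
    exact hp ⟨x, by ext j; exact (h j).symm⟩
  have hsec : f (aeval s (f (X i))) = f (X i) := by
    rw [← AlgHom.comp_apply f, comp_aeval]
    simp only [hs]
    exact aeval_X_left_apply _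
  have heval : aeval p (aeval s (f (X i))) = comap f x i := by
    rw [← AlgHom.comp_apply (aeval p), comp_aeval, comap_apply]
  refine ⟨C (p i - comap f x i)⁻¹ * (X i - aeval s (f (X i))), ?_, ?_⟩
  · rw [RingHom.mem_ker, map_mul, map_sub, hsec, sub_self, mul_zero]
  · rw [map_mul, aeval_C, map_sub, aeval_X, heval]
    exact inv_mul_cancel₀ (sub_ne_zero.mpr hi)

theorem exists_mem_forall_aeval_eq_one {J : Ideal (MvPolynomial σ k)} (Q : Finset (σ → k))
    (hQ : ∀ p ∈ Q, ∃ H ∈ J, aeval p H = 1) : ∃ E ∈ J, ∀ p ∈ Q, aeval p E = 1 := by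
  choose! H hHJ hH using hQ
  refine ⟨1 - ∏ p ∈ Q, (1 - H p), ?_, fun p hp => ?_⟩
  · rw [← Ideal.Quotient.eq_zero_iff_mem, map_sub, map_one, map_prod,
      Finset.prod_eq_one fun p hp => by rw [map_sub, map_one,
        Ideal.Quotient.eq_zero_iff_mem.mpr (hHJ p hp), sub_zero], sub_self]
  · rw [map_sub, map_one, map_prod, Finset.prod_eq_zero hp (by rw [map_sub, map_one, hH p hp,
      sub_self]), sub_zero]

theorem vanishingIdeal_preimage_comap {f : MvPolynomial σ k →ₐ[k] MvPolynomial τ k}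
    (hf : Function.Surjective f) {P : Set (σ → k)} (hP : P.Finite) :
    vanishingIdeal k (comap f ⁻¹' P) = (vanishingIdeal k P).map f := by
  refine le_antisymm (fun q hq => ?_) (Ideal.map_le_iff_le_comap.mpr fun G hG => ?_)
  · obtain ⟨F, rfl⟩ := hf q
    have hQ : ∀ p ∈ (hP.sdiff (t := Set.range (comap f))).toFinset,
        ∃ H ∈ RingHom.ker f, aeval p H = 1 := fun p hp =>
      exists_mem_ker_aeval_eq_one_of_notMem_range_comap hf ((Set.Finite.mem_toFinset _).mp hp).2
    obtain ⟨E, hEker, hE⟩ := exists_mem_forall_aeval_eq_one _ hQ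
    have hFE : F * (1 - E) ∈ vanishingIdeal k P := by
      refine mem_vanishingIdeal_iff.mpr fun p hp => ?_
      rw [map_mul]
      by_cases hpr : p ∈ Set.range (comap f)
      · obtain ⟨x, rfl⟩ := hpr
        rw [aeval_comap, mem_vanishingIdeal_iff.mp hq x hp, zero_mul]
      · rw [map_sub, map_one, hE p (by simp [hp, hpr]), sub_self, mul_zero]
    have hfFE : f (F * (1 - E)) = f F := by
      rw [map_mul, map_sub, map_one, RingHom.mem_ker.mp hEker, sub_zero, mul_one]
    exact hfFE ▸ Ideal.mem_map_of_mem f hFE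
  · refine Ideal.mem_comap.mpr (mem_vanishingIdeal_iff.mpr fun x hx => ?_)
    rw [← aeval_comap]
    exact mem_vanishingIdeal_iff.mp hG _ hx

theorem vanishingIdeal_pi_finset [Finite σ] (S : σ → Finset k) (hS : ∀ i, (S i).Nonempty) :
    vanishingIdeal k {x | ∀ i, x i ∈ S i} =
      Ideal.span (Set.range fun i => ∏ s ∈ S i, (X i - C s)) := by
  refine le_antisymm (fun f hf => ?_) (Ideal.span_le.mpr ?_)
  · obtain ⟨h, -, rfl⟩ := combinatorial_nullstellensatz_exists_linearCombination S hS f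
      fun x hx => by simpa using mem_vanishingIdeal_iff.mp hf x hx
    exact Finsupp.mem_span_range_iff_exists_finsupp.mpr ⟨h, rfl⟩
  · rintro _ ⟨i, rfl⟩
    refine mem_vanishingIdeal_iff.mpr fun x hx => ?_
    rw [map_prod]
    exact Finset.prod_eq_zero (hx i) (by simp)

end MvPolynomial

theorem range_coe_units_pi {ι : Type*} :
    Set.range (fun (ε : ι → ℤˣ) a => (ε a : ℤ)) = {eps | ∀ a, eps a = 1 ∨ eps a = -1} := by
  ext eps
  constructor
  · rintro ⟨ε, rfl⟩ a
    exact Int.isUnit_iff.mp (ε a).isUnit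
  · intro heps
    exact ⟨fun a => (Int.isUnit_iff.mpr (heps a)).unit, funext fun a => IsUnit.unit_spec _⟩

section SignedSums

variable {ι : Type*} [Fintype ι]

theorem abs_sum_units_mul_le (ε : ι → ℤˣ) (lam : ι → ℤ) :
    |∑ a, (ε a : ℤ) * lam a| ≤ ∑ a, |lam a| :=
  (abs_sum_le_sum_abs _ _).trans_eq <| Finset.sum_congr rfl fun a _ => by
    rw [abs_mul, Int.abs_eq_natAbs (ε a), Int.units_natAbs, Nat.cast_one, one_mul]

theorem two_dvd_sum_units_mul_sub_sum_abs (ε : ι → ℤˣ) (lam : ι → ℤ) :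
    2 ∣ ∑ a, (ε a : ℤ) * lam a - ∑ a, |lam a| := by
  rw [← Finset.sum_sub_distrib]
  refine Finset.dvd_sum fun a _ => ?_
  rcases Int.isUnit_iff.mp (ε a).isUnit with h | h <;> rcases abs_choice (lam a) with h' | h' <;>
    rw [h, h'] <;> omega

theorem exists_sum_units_mul_eq_sum_abs (lam : ι → ℤ) :
    ∃ ε : ι → ℤˣ, ∑ a, (ε a : ℤ) * lam a = ∑ a, |lam a| :=
  ⟨fun a => if 0 ≤ lam a then 1 else -1, Finset.sum_congr rfl fun a _ => by
    by_cases h : 0 ≤ lam a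
    · simp [h, abs_of_nonneg h]
    · simp [h, abs_of_neg (not_le.mp h)]⟩

noncomputable def signedSum (ε : ι → ℤˣ) : MvPolynomial ι ℚ :=
  ∑ a, C ((ε a : ℤ) : ℚ) * X a

theorem aeval_signedSum (x : ι → ℚ) (ε : ι → ℤˣ) :
    aeval x (signedSum ε) = ∑ a, ((ε a : ℤ) : ℚ) * x a := by
  simp [signedSum]

noncomputable def signedSumHom (ι : Type*) [Fintype ι] :
    MvPolynomial (ι → ℤˣ) ℚ →ₐ[ℚ] MvPolynomial ι ℚ :=
  aeval signedSum

theorem comap_signedSumHom_apply (x : ι → ℚ) (ε : ι → ℤˣ) :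
    comap (signedSumHom ι) x ε = aeval x (signedSum ε) := by
  rw [comap_apply, signedSumHom, aeval_X]

variable [DecidableEq ι]

theorem signedSum_one_sub_signedSum_update (a : ι) :
    signedSum (1 : ι → ℤˣ) - signedSum (Function.update 1 a (-1)) = C 2 * X a := by
  rw [signedSum, signedSum, ← Finset.sum_sub_distrib, Finset.sum_eq_single a]
  · simp only [Pi.one_apply, Function.update_self]
    rw [← sub_mul, ← map_sub]
    norm_num
  · intro b _ hb
    simp [Function.update_of_ne hb]
  · simp

theorem signedSumHom_surjective : Function.Surjective (signedSumHom ι) := by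
  have hX : ∀ a, X a ∈ (signedSumHom ι).range := fun a =>
    ⟨C (1 / 2) * (X 1 - X (Function.update (1 : ι → ℤˣ) a (-1))), show signedSumHom ι _ = _ by
      rw [map_mul, map_sub, signedSumHom, aeval_X, aeval_X, aeval_C,
        signedSum_one_sub_signedSum_update, algebraMap_eq, ← mul_assoc, ← map_mul]
      norm_num⟩
  rw [← AlgHom.range_eq_top, eq_top_iff, ← adjoin_range_X, Algebra.adjoin_le_iff]
  rintro _ ⟨a, rfl⟩
  exact hX a

end SignedSums

def weightLevels (r : ℕ) : Finset ℚ := (range (r + 1)).image fun j : ℕ => (r : ℚ) - 2 * j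

theorem mem_weightLevels_iff {r : ℕ} {q : ℚ} :
    q ∈ weightLevels r ↔ ∃ t : ℤ, |t| ≤ r ∧ t % 2 = r % 2 ∧ (t : ℚ) = q := by
  simp only [weightLevels, Finset.mem_image, Finset.mem_range]
  constructor
  · rintro ⟨j, hj, rfl⟩
    exact ⟨r - 2 * j, abs_le.mpr ⟨by omega, by omega⟩, by omega, by push_cast; ring⟩
  · rintro ⟨t, ht, hpar, rfl⟩
    obtain ⟨ht₁, ht₂⟩ := abs_le.mp ht
    obtain ⟨j, hj⟩ : ∃ j : ℕ, (r : ℤ) - t = 2 * j := ⟨((r - t) / 2).toNat, by omega⟩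
    refine ⟨j, by omega, ?_⟩
    have : ((r : ℤ) : ℚ) - t = 2 * j := by exact_mod_cast hj
    push_cast at this
    linarith

section WeightLattice

variable {ι : Type*} [Fintype ι] [DecidableEq ι] {r : ℕ}

theorem exists_intCast_of_forall_comap_mem_weightLevels {x : ι → ℚ}
    (hx : ∀ ε, comap (signedSumHom ι) x ε ∈ weightLevels r) :
    ∃ lam : ι → ℤ, (fun a => (lam a : ℚ)) = x := by
  have hint : ∀ a, ∃ m : ℤ, (m : ℚ) = x a := by
    intro a
    obtain ⟨t₁, -, h₁, ht₁⟩ := mem_weightLevels_iff.mp (hx 1)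
    obtain ⟨t₂, -, h₂, ht₂⟩ := mem_weightLevels_iff.mp (hx (Function.update 1 a (-1)))
    have h2x : (t₁ : ℚ) - t₂ = 2 * x a := by
      rw [ht₁, ht₂, comap_signedSumHom_apply, comap_signedSumHom_apply, ← map_sub,
        signedSum_one_sub_signedSum_update, map_mul, aeval_C, aeval_X,
        Algebra.algebraMap_self, RingHom.id_apply]
    obtain ⟨m, hm⟩ : 2 ∣ t₁ - t₂ := by omega
    refine ⟨m, ?_⟩
    have : ((t₁ - t₂ : ℤ) : ℚ) = 2 * m := by exact_mod_cast hm
    push_cast at this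
    linarith
  choose lam hlam using hint
  exact ⟨lam, funext hlam⟩

theorem comap_signedSumHom_preimage_weightLevels :
    comap (signedSumHom ι) ⁻¹' {x | ∀ ε, x ε ∈ weightLevels r} =
      (fun lam : ι → ℤ => fun a => (lam a : ℚ)) ''
        {lam | ∑ a, |lam a| ≤ r ∧ (∑ a, |lam a|) % 2 = r % 2} := by
  ext x
  constructor
  · intro hx
    obtain ⟨lam, rfl⟩ := exists_intCast_of_forall_comap_mem_weightLevels hx
    obtain ⟨ε, hε⟩ := exists_sum_units_mul_eq_sum_abs lam
    obtain ⟨t, ht, hpar, htq⟩ := mem_weightLevels_iff.mp (hx ε)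
    rw [comap_signedSumHom_apply, aeval_signedSum] at htq
    obtain rfl : t = ∑ a, |lam a| := by rw [← hε]; exact_mod_cast htq
    exact ⟨lam, ⟨(le_abs_self _).trans ht, hpar⟩, rfl⟩
  · rintro ⟨lam, ⟨h₁, h₂⟩, rfl⟩ ε
    refine mem_weightLevels_iff.mpr ⟨∑ a, (ε a : ℤ) * lam a,
      (abs_sum_units_mul_le ε lam).trans h₁, ?_, ?_⟩
    · have := two_dvd_sum_units_mul_sub_sum_abs ε lam
      omega
    · rw [comap_signedSumHom_apply, aeval_signedSum]
      push_cast
      rfl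

end WeightLattice

theorem signedSumHom_prod_weightLevels {ι : Type*} [Fintype ι] (r : ℕ) (ε : ι → ℤˣ) :
    signedSumHom ι (∏ s ∈ weightLevels r, (X ε - C s)) =
      ∏ j ∈ range (r + 1), (signedSum ε - C ((r : ℚ) - 2 * j)) := by
  have hinj : Set.InjOn (fun j : ℕ => (r : ℚ) - 2 * j) (range (r + 1)) := fun i _ j _ h => by
    simpa using h
  rw [weightLevels, Finset.prod_image hinj, map_prod]
  refine Finset.prod_congr rfl fun j _ => ?_
  rw [map_sub, signedSumHom, aeval_X, aeval_C, algebraMap_eq]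

theorem stmt13_general (n r : ℕ) :
    MvPolynomial.vanishingIdeal ℚ
        ((fun lam : Fin n → ℤ => fun a : Fin n => (lam a : ℚ)) ''
          {lam : Fin n → ℤ |
            (∑ a, |lam a|) ≤ (r : ℤ) ∧ (∑ a, |lam a|) % 2 = (r : ℤ) % 2}) =
      Ideal.span
        ((fun eps : Fin n → ℤ =>
            ∏ j ∈ Finset.range (r + 1),
              ((∑ a, MvPolynomial.C (eps a : ℚ) * MvPolynomial.X a) -
                MvPolynomial.C ((r : ℚ) - 2 * (j : ℚ)))) ''
          {eps : Fin n → ℤ | ∀ a, eps a = 1 ∨ eps a = -1}) := by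
  have hgrid : {x : (Fin n → ℤˣ) → ℚ | ∀ ε, x ε ∈ weightLevels r}.Finite :=
    (Fintype.piFinset fun _ => weightLevels r).finite_toSet.subset
      fun x hx => Fintype.mem_piFinset.mpr hx
  have hne : (weightLevels r).Nonempty := (nonempty_range_add_one).image _
  rw [← comap_signedSumHom_preimage_weightLevels, vanishingIdeal_preimage_comap
      signedSumHom_surjective hgrid, vanishingIdeal_pi_finset _ fun _ => hne, Ideal.map_span,
    ← Set.range_comp, ← range_coe_units_pi, ← Set.range_comp]
  congr 2
  funext ε
  exact signedSumHom_prod_weightLevels r ε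

/-- Let `D = {λ ∈ ℤ^n : |λ_1| + ⋯ + |λ_n| ≤ r` and
`|λ_1| + ⋯ + |λ_n| ≡ r (mod 2)}`, viewed as points of `ℚ^n`.  Then the vanishing ideal
of `D` in `ℚ[X₁,…,Xₙ]` equals the ideal generated by the polynomials
`∏_{j=0}^{r} (J_ε − (r − 2j))` for each sign vector `ε ∈ {±1}^n`, where
`J_ε = ε₁X₁ + ⋯ + εₙXₙ`. -/
theorem stmt13 (n r : ℕ) (hn : 1 ≤ n) :
    MvPolynomial.vanishingIdeal ℚ
        ((fun lam : Fin n → ℤ => fun a : Fin n => (lam a : ℚ)) ''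
          {lam : Fin n → ℤ |
            (∑ a, |lam a|) ≤ (r : ℤ) ∧ (∑ a, |lam a|) % 2 = (r : ℤ) % 2}) =
      Ideal.span
        ((fun eps : Fin n → ℤ =>
            ∏ j ∈ Finset.range (r + 1),
              ((∑ a, MvPolynomial.C (eps a : ℚ) * MvPolynomial.X a) -
                MvPolynomial.C ((r : ℚ) - 2 * (j : ℚ)))) ''
          {eps : Fin n → ℤ | ∀ a, eps a = 1 ∨ eps a = -1}) :=
  stmt13_general n r
end
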